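/- If h(τ) ≠ 0 for almost every τ ∈ [0,T], then the optimal control φ̃ characterized by the variational inequality h·(φ - φ̃) ≥ 0 for all admissible φ is bang-bang: φ̃(τ) ∈ {0, K} for almost every τ. -/
import Mathlib


open MeasureTheory

/-- If h ≠ 0 a.e. on [0,T], the optimal control characterized by the variational
inequality is bang-bang: φ̃(τ) ∈ {0, K} for a.e. τ. -/
theorem bang_bang_control (T K : ℝ) (hT : 0 < T) (hK : 0 < K)
    (h : ℝ → ℝ) (hmeas : Measurable h)
    (hne : ∀ᵐ τ ∂(volume.restrict (Set.Icc (0 : ℝ) T)), h τ ≠ 0)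
    (φt : ℝ → ℝ) (hφt_meas : Measurable φt)
    (hφt_mem : ∀ τ, φt τ ∈ Set.Icc (0 : ℝ) K)
    (hVI : ∀ φ : ℝ → ℝ, Measurable φ → (∀ τ, φ τ ∈ Set.Icc (0 : ℝ) K) →
      0 ≤ ∫ τ in Set.Icc (0 : ℝ) T, h τ * (φ τ - φt τ)) :
    ∀ᵐ τ ∂(volume.restrict (Set.Icc (0 : ℝ) T)), φt τ ∈ ({0, K} : Set ℝ) := by
  set g : ℝ → ℝ := fun τ => if 0 < h τ then 0 else K with hg
  have hg_meas : Measurable g :=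
    Measurable.ite (measurableSet_lt measurable_const hmeas) measurable_const measurable_const
  have hg_mem : ∀ τ, g τ ∈ Set.Icc (0 : ℝ) K := by
    intro τ
    by_cases hτ : 0 < h τ <;> simp [g, hτ, hK.le, le_refl]
  -- key: for each n, the integrand with the truncated test control vanishes a.e.
  have key : ∀ n : ℕ, ∀ᵐ τ ∂(volume.restrict (Set.Icc (0 : ℝ) T)),
      h τ * ((if |h τ| ≤ (n : ℝ) then g τ else φt τ) - φt τ) = 0 := by
    intro n
    set φn : ℝ → ℝ := fun τ => if |h τ| ≤ (n : ℝ) then g τ else φt τ with hφn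
    have hφn_meas : Measurable φn :=
      Measurable.ite (measurableSet_le hmeas.abs measurable_const) hg_meas hφt_meas
    have hφn_mem : ∀ τ, φn τ ∈ Set.Icc (0 : ℝ) K := by
      intro τ
      by_cases hτ : |h τ| ≤ (n : ℝ) <;> simp only [φn, hτ, if_true, if_false]
      · exact hg_mem τ
      · exact hφt_mem τ
    set f : ℝ → ℝ := fun τ => h τ * (φn τ - φt τ) with hf
    have hf_meas : Measurable f := hmeas.mul (hφn_meas.sub hφt_meas)
    have hf_nonpos : ∀ τ, f τ ≤ 0 := by
      intro τ
      by_cases hτ : |h τ| ≤ (n : ℝ)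
      · simp only [f, φn, hτ, if_true]
        by_cases hpos : 0 < h τ
        · simp only [g, hpos, if_true]
          have := (hφt_mem τ).1
          nlinarith
        · simp only [g, hpos, if_false]
          have := (hφt_mem τ).2
          push_neg at hpos
          nlinarith
      · simp [f, φn, hτ]
    have hf_bound : ∀ τ, |f τ| ≤ (n : ℝ) * K := by
      intro τ
      by_cases hτ : |h τ| ≤ (n : ℝ)
      · have h1 : |φn τ - φt τ| ≤ K := by
          have h2 := hφn_mem τ
          have h3 := hφt_mem τ
          rw [abs_le]
          constructor <;> [nlinarith [h2.1, h3.2]; nlinarith [h2.2, h3.1]]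
        calc |f τ| = |h τ| * |φn τ - φt τ| := abs_mul _ _
          _ ≤ (n : ℝ) * K := by
              apply mul_le_mul hτ h1 (abs_nonneg _)
              exact Nat.cast_nonneg n
      · simp [f, φn, hτ, abs_nonneg, mul_nonneg (Nat.cast_nonneg n) hK.le]
    have hf_int : Integrable f (volume.restrict (Set.Icc (0 : ℝ) T)) := by
      refine (integrable_const ((n : ℝ) * K)).mono' hf_meas.aestronglyMeasurable ?_
      exact ae_of_all _ hf_bound
    have hint : (0 : ℝ) ≤ ∫ τ in Set.Icc (0 : ℝ) T, f τ := hVI φn hφn_meas hφn_mem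
    have hint2 : ∫ τ in Set.Icc (0 : ℝ) T, f τ ≤ 0 :=
      integral_nonpos (fun τ => hf_nonpos τ)
    have hzero : ∫ τ in Set.Icc (0 : ℝ) T, f τ = 0 := le_antisymm hint2 hint
    have hneg : (fun τ => -f τ) =ᵐ[volume.restrict (Set.Icc (0 : ℝ) T)] 0 := by
      refine (integral_eq_zero_iff_of_nonneg_ae
        (ae_of_all _ (fun τ => neg_nonneg.2 (hf_nonpos τ))) hf_int.neg).mp ?_
      simp [integral_neg, hzero]
    filter_upwards [hneg] with τ hτ
    simpa [f] using neg_eq_zero.mp hτ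
  have keyall : ∀ᵐ τ ∂(volume.restrict (Set.Icc (0 : ℝ) T)),
      ∀ n : ℕ, h τ * ((if |h τ| ≤ (n : ℝ) then g τ else φt τ) - φt τ) = 0 :=
    (ae_all_iff).2 key
  filter_upwards [hne, keyall] with τ hτne hτall
  obtain ⟨n, hn⟩ := exists_nat_ge (|h τ|)
  have := hτall n
  rw [if_pos hn] at this
  have heq : g τ = φt τ := by
    rcases mul_eq_zero.mp this with hc | hc
    · exact absurd hc hτne
    · linarith [sub_eq_zero.mp hc]
  by_cases hpos : 0 < h τ
  · left
    rw [← heq]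
    simp [g, hpos]
  · right
    rw [← heq]
    simp [g, hpos]
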